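/- For every binary sequence A, the number of binary trees T with f(T) = A equals W(A), the number of binary sequences dominated by A. -/

import Mathlib

/-- One move: replace an adjacent pair `10` by `01` (a `1` moves one step right).
`true` encodes the digit 1 and `false` encodes the digit 0. -/
def DomStep (A B : List Bool) : Prop :=
  ∃ X Y : List Bool, A = X ++ true :: false :: Y ∧ B = X ++ false :: true :: Y

/-- `Dom A B` (`A ⪰ B`): `B` is obtained from `A` by finitely many such moves. -/
def Dom : List Bool → List Bool → Prop := Relation.ReflTransGen DomStep

/-- The weight W(A): the number of binary sequences dominated by A. -/
noncomputable def W (A : List Bool) : ℕ := Set.ncard {B | Dom A B}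

/-- Binary trees: empty, or a root with a left subtree only, a right subtree only, or both. -/
inductive BTree where
  | empty : BTree
  | left : BTree → BTree
  | right : BTree → BTree
  | both : BTree → BTree → BTree

/-- f(empty) = ε, f = f(L)·0, 1·f(R), or f(L)·01·f(R). -/
def f : BTree → List Bool
  | .empty => []
  | .left L => f L ++ [false]
  | .right R => true :: f R
  | .both L R => f L ++ [false, true] ++ f R

/-- A second encoding of binary trees. -/
def g : BTree → List Bool
  | .empty => []
  | .left L => g L ++ [false]
  | .right R => g R ++ [true]
  | .both L R => g L ++ [false] ++ g R ++ [true]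

def NL : BTree → Prop
  | .right _ => True
  | .both _ _ => True
  | _ => False

def phi : BTree → BTree
  | .empty => .right .empty
  | .left L => .both L .empty
  | .right R => .right (phi R)
  | .both L R => .both L (phi R)

def zeta : BTree → BTree
  | .right R => .right (.left R)
  | .both L R => .both L (.left R)
  | T => T

def chain : ℕ → BTree
  | 0 => .empty
  | n+1 => .left (chain n)

def sig : ℕ → BTree → BTree
  | m, .left L => if m ≤ 1 then zeta (phi L) else zeta (sig (m-1) L)
  | m, .right R => .right (sig m R)
  | m, .both L R => .both L (sig m R)
  | _, .empty => .empty

def sz : BTree → ℕ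
  | .empty => 0
  | .left L => sz L + 1
  | .right R => sz R + 1
  | .both L R => sz L + sz R + 2

def ones (A : List Bool) : ℕ := A.count true

def Cond (A B : List Bool) : Prop :=
  A.length = B.length ∧ ones B = ones A ∧ ∀ k, ones (B.take k) ≤ ones (A.take k)

-- Dom congruences
lemma dom_step_append {A B : List Bool} (X Y : List Bool) (h : DomStep A B) :
    DomStep (X ++ A ++ Y) (X ++ B ++ Y) := by
  obtain ⟨U, V, hA, hB⟩ := h
  exact ⟨X ++ U, V ++ Y, by simp [hA], by simp [hB]⟩

lemma dom_append {A B : List Bool} (X Y : List Bool) (h : Dom A B) :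
    Dom (X ++ A ++ Y) (X ++ B ++ Y) :=
  Relation.ReflTransGen.lift (fun l => X ++ l ++ Y) (fun _ _ h => dom_step_append X Y h) _ _ h

lemma dom_append_left {A B : List Bool} (X : List Bool) (h : Dom A B) :
    Dom (X ++ A) (X ++ B) := by
  have := dom_append X [] h; simpa using this

lemma dom_append_right {A B : List Bool} (Y : List Bool) (h : Dom A B) :
    Dom (A ++ Y) (B ++ Y) := by
  have := dom_append [] Y h; simpa using this

lemma dom_trans {A B C : List Bool} (h₁ : Dom A B) (h₂ : Dom B C) : Dom A C :=
  Relation.ReflTransGen.trans h₁ h₂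

lemma dom_rot (C : List Bool) : Dom (true :: C) (C ++ [true]) := by
  induction C with
  | nil => exact Relation.ReflTransGen.refl
  | cons c C ih =>
    cases c with
    | true =>
      have := dom_append_left [true] ih
      simpa using this
    | false =>
      have h1 : DomStep (true :: false :: C) (false :: true :: C) := ⟨[], C, rfl, rfl⟩
      have h2 : Dom (false :: true :: C) ((false :: C) ++ [true]) := by
        have := dom_append_left [false] ih
        simpa using this
      exact dom_trans (Relation.ReflTransGen.single h1) h2

lemma dom_fg (T : BTree) : Dom (f T) (g T) := by
  induction T with
  | empty => exact Relation.ReflTransGen.refl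
  | left L ih => exact dom_append_right [false] ih
  | right R ih =>
    have h1 : Dom (true :: f R) (true :: g R) := by
      have := dom_append_left [true] ih; simpa using this
    exact dom_trans h1 (dom_rot (g R))
  | both L R ihL ihR =>
    have h1 : Dom (f L ++ [false, true] ++ f R) (g L ++ ([false, true] ++ f R)) := by
      have := dom_append_right ([false, true] ++ f R) ihL
      simpa [List.append_assoc] using this
    have h2 : Dom (true :: f R) (g R ++ [true]) := by
      have h2a : Dom (true :: f R) (true :: g R) := by
        have := dom_append_left [true] ihR; simpa using this
      exact dom_trans h2a (dom_rot (g R))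
    have h3 : Dom (g L ++ ([false, true] ++ f R)) (g L ++ [false] ++ g R ++ [true]) := by
      have := dom_append_left (g L ++ [false]) h2
      simpa [List.append_assoc] using this
    show Dom (f L ++ [false, true] ++ f R) (g L ++ [false] ++ g R ++ [true])
    exact dom_trans h1 h3

lemma ones_append (X Y : List Bool) : ones (X ++ Y) = ones X + ones Y := by
  simp [ones, List.count_append]

lemma ones_take_le (A : List Bool) (k : ℕ) : ones (A.take k) ≤ ones A :=
  List.Sublist.count_le true (List.take_sublist k A)

lemma cond_refl (A : List Bool) : Cond A A := ⟨rfl, rfl, fun _ => le_rfl⟩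

lemma cond_trans {A B C : List Bool} (h₁ : Cond A B) (h₂ : Cond B C) : Cond A C :=
  ⟨h₁.1.trans h₂.1, h₂.2.1.trans h₁.2.1, fun k => (h₂.2.2 k).trans (h₁.2.2 k)⟩

lemma ones_take_cons_cons (Y : List Bool) (j : ℕ) :
    ones ((false :: true :: Y).take j) ≤ ones ((true :: false :: Y).take j) := by
  match j with
  | 0 => simp [ones]
  | 1 => simp [ones]
  | (j+2) => simp [ones, List.count_cons]

lemma cond_of_step {A B : List Bool} (h : DomStep A B) : Cond A B := by
  obtain ⟨X, Y, hA, hB⟩ := h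
  subst hA; subst hB
  refine ⟨by simp, by simp [ones, List.count_append, List.count_cons], fun k => ?_⟩
  rcases le_or_gt k X.length with hk | hk
  · rw [List.take_append_of_le_length hk, List.take_append_of_le_length hk]
  · obtain ⟨j, rfl⟩ := Nat.exists_eq_add_of_le hk.le
    rw [List.take_append, List.take_append]
    simp only [ones_append]
    have := ones_take_cons_cons Y (X.length + j - X.length)
    omega

lemma dom_cond {A B : List Bool} (h : Dom A B) : Cond A B := by
  induction h with
  | refl => exact cond_refl A
  | tail _ hstep ih => exact cond_trans ih (cond_of_step hstep)

lemma f_eq_nil {T : BTree} (h : f T = []) : T = .empty := by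
  cases T <;> simp [f] at h ⊢

lemma f_phi (T : BTree) : f (phi T) = f T ++ [true] := by
  induction T with
  | empty => simp [phi, f]
  | left L _ => simp [phi, f]
  | right R ih => simp [phi, f, ih]
  | both L R _ ih => simp [phi, f, ih]

lemma g_phi (T : BTree) : g (phi T) = g T ++ [true] := by
  induction T with
  | empty => simp [phi, g]
  | left L _ => simp [phi, g]
  | right R ih => simp [phi, g, ih]
  | both L R _ ih => simp [phi, g, ih]

lemma NL_phi (T : BTree) : NL (phi T) := by
  cases T <;> simp [phi, NL]

lemma phi_surj : ∀ (T : BTree) (A : List Bool), f T = A ++ [true] →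
    ∃ T', T = phi T' ∧ f T' = A := by
  intro T
  induction T with
  | empty => intro A h; simp [f] at h
  | left L _ =>
    intro A h
    simp only [f] at h
    obtain ⟨_, h2⟩ := List.append_inj' h (by simp)
    simp at h2
  | right R ih =>
    intro A h
    simp only [f] at h
    cases A with
    | nil =>
      simp at h
      exact ⟨.empty, by rw [f_eq_nil h]; rfl, rfl⟩
    | cons a A' =>
      simp at h
      obtain ⟨ha, hR⟩ := h
      obtain ⟨R', rfl, hfR'⟩ := ih A' hR
      exact ⟨.right R', rfl, by simp [f, hfR', ha]⟩
  | both L R _ ihR =>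
    intro A h
    simp only [f] at h
    rcases List.eq_nil_or_concat (f R) with hR | ⟨fR', x, hR⟩
    · rw [hR] at h
      simp at h
      have h' : (f L ++ [false]) ++ [true] = A ++ [true] := by simpa [List.append_assoc] using h
      obtain ⟨h1, _⟩ := List.append_inj' h' rfl
      exact ⟨.left L, by rw [f_eq_nil hR]; rfl, by simp [f, h1]⟩
    · rw [List.concat_eq_append] at hR
      rw [hR] at h
      have h' : (f L ++ [false, true] ++ fR') ++ [x] = A ++ [true] := by
        simpa [List.append_assoc] using h
      obtain ⟨h1, h2⟩ := List.append_inj' h' rfl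
      simp at h2
      subst h2
      obtain ⟨R', rfl, hfR'⟩ := ihR fR' hR
      exact ⟨.both L R', rfl, by simp [f, hfR', ← h1]⟩

lemma f_chain (m : ℕ) : f (chain m) = List.replicate m false := by
  induction m with
  | zero => rfl
  | succ n ih => rw [chain, f, ih, ← List.replicate_succ']

lemma chain_unique : ∀ (T : BTree) (m : ℕ), f T = List.replicate m false → T = chain m := by
  intro T
  induction T with
  | empty => intro m h; cases m with
    | zero => rfl
    | succ n => simp [f] at h
  | left L ih =>
    intro m h
    cases m with
    | zero => simp [f] at h
    | succ n =>
      rw [List.replicate_succ'] at h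
      simp only [f] at h
      obtain ⟨h1, _⟩ := List.append_inj' h rfl
      rw [chain, ih n h1]
  | right R _ =>
    intro m h
    cases m with
    | zero => simp [f] at h
    | succ n => rw [List.replicate_succ] at h; simp [f] at h
  | both L R _ _ =>
    intro m h
    have : true ∈ f (.both L R) := by simp [f]
    rw [h] at this
    have := List.eq_of_mem_replicate this
    simp at this

lemma zeta_f {T : BTree} (h : NL T) : f (zeta T) = f T ++ [false] := by
  cases T with
  | empty => exact absurd h (by simp [NL])
  | left L => exact absurd h (by simp [NL])
  | right R => simp [zeta, f]
  | both L R => simp [zeta, f]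

lemma zeta_g {T : BTree} (h : NL T) (X : List Bool) (hg : g T = X ++ [true]) :
    g (zeta T) = X ++ [false, true] := by
  cases T with
  | empty => exact absurd h (by simp [NL])
  | left L => exact absurd h (by simp [NL])
  | right R =>
    simp only [g] at hg
    obtain ⟨h1, _⟩ := List.append_inj' hg rfl
    simp [zeta, g, ← h1]
  | both L R =>
    simp only [g] at hg
    have hg' : (g L ++ [false] ++ g R) ++ [true] = X ++ [true] := by
      simpa [List.append_assoc] using hg
    obtain ⟨h1, _⟩ := List.append_inj' hg' rfl
    simp [zeta, g, ← h1]

lemma zeta_NL {T : BTree} (h : NL T) : NL (zeta T) := by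
  cases T <;> simp [NL, zeta] at h ⊢

lemma NL_mem_f {T : BTree} (h : NL T) : true ∈ f T := by
  cases T with
  | empty => simp [NL] at h
  | left L => simp [NL] at h
  | right R => simp [f]
  | both L R => simp [f]

lemma g_NL {T : BTree} (h : NL T) : ∃ X, g T = X ++ [true] := by
  cases T with
  | empty => simp [NL] at h
  | left L => simp [NL] at h
  | right R => exact ⟨g R, rfl⟩
  | both L R => exact ⟨g L ++ [false] ++ g R, by simp [g]⟩

-- list surgery
lemma split_tail : ∀ (m : ℕ) (X Y D : List Bool),
    X ++ true :: Y = D ++ List.replicate m false →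
    ∃ Y', Y = Y' ++ List.replicate m false ∧ D = X ++ true :: Y' := by
  intro m
  induction m with
  | zero => intro X Y D h; exact ⟨Y, by simp, by simpa using h.symm⟩
  | succ n ih =>
    intro X Y D h
    rw [List.replicate_succ'] at h
    rcases List.eq_nil_or_concat Y with rfl | ⟨Y₀, y, rfl⟩
    · have h' : X ++ [true] = (D ++ List.replicate n false) ++ [false] := by
        simpa [List.append_assoc] using h
      obtain ⟨_, h2⟩ := List.append_inj' h' rfl
      simp at h2
    · have h' : (X ++ true :: Y₀) ++ [y] = (D ++ List.replicate n false) ++ [false] := by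
        simpa [List.append_assoc] using h
      obtain ⟨h1, h2⟩ := List.append_inj' h' rfl
      simp at h2
      subst h2
      obtain ⟨Y', hY, hD⟩ := ih X Y₀ D h1
      exact ⟨Y', by rw [hY, List.replicate_succ']; simp, hD⟩

lemma exists_decomp {A : List Bool} (h : true ∈ A) :
    ∃ C m, A = C ++ true :: List.replicate m false := by
  induction A using List.reverseRecOn with
  | nil => simp at h
  | append_singleton A₀ a ih =>
    cases a with
    | true => exact ⟨A₀, 0, by simp⟩
    | false =>
      have hmem : true ∈ A₀ := by simpa using h
      obtain ⟨C, m, rfl⟩ := ih hmem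
      exact ⟨C, m + 1, by rw [List.replicate_succ']; simp⟩

lemma decomp_unique {X Y : List Bool} {m k : ℕ}
    (h : X ++ true :: List.replicate m false = Y ++ true :: List.replicate k false) :
    X = Y ∧ m = k := by
  have h' : X ++ true :: List.replicate m false = (Y ++ [true]) ++ List.replicate k false := by
    simpa [List.append_assoc] using h
  obtain ⟨Y', hY', hD⟩ := split_tail k X (List.replicate m false) (Y ++ [true]) h'
  have hall : ∀ y ∈ Y', y = false := by
    intro y hy
    have : y ∈ List.replicate m false := hY' ▸ List.mem_append_left _ hy
    exact List.eq_of_mem_replicate this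
  rcases List.eq_nil_or_concat Y' with rfl | ⟨Y₀, y, rfl⟩
  · simp at hD
    refine ⟨hD.symm, ?_⟩
    have := congrArg List.length hY'
    simpa using this
  · have hyf : y = false := hall y (by simp)
    have hD' : Y ++ [true] = (X ++ true :: Y₀) ++ [y] := by simpa [List.append_assoc] using hD
    obtain ⟨_, h2⟩ := List.append_inj' hD' rfl
    simp [hyf] at h2

lemma sig_spec : ∀ (S : BTree) (D : List Bool) (m : ℕ), 1 ≤ m →
    f S = D ++ List.replicate m false →
    f (sig m S) = D ++ true :: List.replicate m false ∧
    g (sig m S) = g S ++ [true] ∧ NL (sig m S) := by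
  intro S
  induction S with
  | empty =>
    intro D m hm h
    simp [f] at h
    omega
  | left L ih =>
    intro D m hm h
    have hrep : List.replicate m false = List.replicate (m-1) false ++ [false] := by
      conv_lhs => rw [show m = (m-1) + 1 by omega]
      rw [List.replicate_succ']
    rw [hrep] at h
    have h' : f L ++ [false] = (D ++ List.replicate (m-1) false) ++ [false] := by
      simpa [List.append_assoc, f] using h
    obtain ⟨hL, _⟩ := List.append_inj' h' rfl
    rcases Nat.lt_or_ge 1 m with hm2 | hm1
    · -- m ≥ 2
      have hms : sig m (.left L) = zeta (sig (m-1) L) := by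
        simp only [sig, if_neg (by omega : ¬ m ≤ 1)]
      obtain ⟨ihf, ihg, ihNL⟩ := ih D (m-1) (by omega) hL
      rw [hms]
      refine ⟨?_, ?_, zeta_NL ihNL⟩
      · rw [zeta_f ihNL, ihf]
        conv_rhs => rw [show m = (m-1) + 1 by omega]
        rw [List.replicate_succ']
        simp
      · rw [zeta_g ihNL (g L) (by rw [ihg])]
        simp [g]
    · -- m = 1
      have hm1' : m = 1 := by omega
      subst hm1'
      have hms : sig 1 (.left L) = zeta (phi L) := by simp [sig]
      simp only [Nat.sub_self, List.replicate, List.append_nil] at hL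
      rw [hms]
      refine ⟨?_, ?_, zeta_NL (NL_phi L)⟩
      · rw [zeta_f (NL_phi L), f_phi, hL]
        simp [List.replicate]
      · rw [zeta_g (NL_phi L) (g L) (g_phi L)]
        simp [g]
  | right R ih =>
    intro D m hm h
    have h' : [] ++ true :: f R = D ++ List.replicate m false := by simpa [f] using h
    obtain ⟨Y', hfR, hD⟩ := split_tail m [] (f R) D h'
    simp at hD
    obtain ⟨ihf, ihg, _⟩ := ih Y' m hm hfR
    refine ⟨?_, ?_, by simp [sig, NL]⟩
    · simp [sig, f, ihf, hD]
    · simp [sig, g, ihg]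
  | both L R _ ihR =>
    intro D m hm h
    have h' : (f L ++ [false]) ++ true :: f R = D ++ List.replicate m false := by
      simpa [f, List.append_assoc] using h
    obtain ⟨Y', hfR, hD⟩ := split_tail m (f L ++ [false]) (f R) D h'
    obtain ⟨ihf, ihg, _⟩ := ihR Y' m hm hfR
    refine ⟨?_, ?_, by simp [sig, NL]⟩
    · simp [sig, f, ihf, hD]
    · simp [sig, g, ihg]

lemma sig_chain : ∀ m : ℕ, 1 ≤ m → sig m (chain m) = .right (chain m) := by
  intro m
  induction m with
  | zero => omega
  | succ k ih =>
    intro _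
    rcases Nat.eq_zero_or_pos k with rfl | hk
    · simp [chain, sig, phi, zeta]
    · have : sig (k+1) (chain (k+1)) = zeta (sig k (chain k)) := by
        simp [chain, sig]; omega
      rw [this, ih hk]
      simp [zeta, chain]

lemma sz_chain (k : ℕ) : sz (chain k) = k := by
  induction k with
  | zero => rfl
  | succ n ih => simp [chain, sz, ih]

lemma repl_pred (m : ℕ) (hm : 1 ≤ m) :
    List.replicate m (false : Bool) = List.replicate (m-1) false ++ [false] := by
  conv_lhs => rw [show m = (m-1) + 1 by omega]
  rw [List.replicate_succ']
lemma sig_surj : ∀ (n : ℕ) (T : BTree), sz T ≤ n → NL T → ∀ (C : List Bool) (m : ℕ), 1 ≤ m →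
    f T = C ++ true :: List.replicate m false →
    ∃ S, f S = C ++ List.replicate m false ∧ sig m S = T := by
  intro n
  induction n with
  | zero =>
    intro T hsz hNL
    cases T <;> simp [NL, sz] at hsz hNL
  | succ n ihn =>
    intro T hsz hNL C m hm h
    cases T with
    | empty => simp [NL] at hNL
    | left L => simp [NL] at hNL
    | right R =>
      simp only [f] at h
      cases C with
      | nil =>
        simp only [List.nil_append, List.cons.injEq] at h
        have hR : R = chain m := chain_unique R m h.2
        subst hR
        exact ⟨chain m, by simp [f_chain], by rw [sig_chain m hm]⟩
      | cons c C' =>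
        simp only [List.cons_append, List.cons.injEq] at h
        obtain ⟨hc, hR⟩ := h
        subst hc
        cases R with
        | empty => simp [f] at hR
        | left M =>
          simp only [f] at hR
          rw [repl_pred m hm] at hR
          have hR' : f M ++ [false] = (C' ++ true :: List.replicate (m-1) false) ++ [false] := by
            simpa [List.append_assoc] using hR
          obtain ⟨hM, _⟩ := List.append_inj' hR' rfl
          rcases Nat.lt_or_ge 1 m with hm2 | hm1
          · -- m ≥ 2
            obtain ⟨L₀, hL₀f, hL₀s⟩ := ihn (.right M) (by simp [sz] at hsz ⊢; omega) (by simp [NL])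
              (true :: C') (m-1) (by omega) (by simp [f, hM])
            refine ⟨.left L₀, ?_, ?_⟩
            · rw [f, hL₀f, repl_pred m hm]; simp
            · have hms : sig m (BTree.left L₀) = zeta (sig (m-1) L₀) := by
                simp only [sig, if_neg (by omega : ¬ m ≤ 1)]
              rw [hms, hL₀s]
              simp [zeta]
          · -- m = 1
            have hm1' : m = 1 := by omega
            subst hm1'
            simp only [Nat.sub_self, List.replicate, List.append_nil] at hM
            obtain ⟨M₁, rfl, hM₁⟩ := phi_surj M C' hM
            refine ⟨.left (.right M₁), ?_, ?_⟩
            · simp [f, hM₁, List.replicate]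
            · simp [sig, phi, zeta]
        | right R' =>
          obtain ⟨S₂, hS₂f, hS₂s⟩ := ihn (.right R') (by simp [sz] at hsz ⊢; omega) (by simp [NL])
            C' m hm hR
          exact ⟨.right S₂, by simp [f, hS₂f], by simp [sig, hS₂s]⟩
        | both L' R' =>
          obtain ⟨S₂, hS₂f, hS₂s⟩ := ihn (.both L' R') (by simp [sz] at hsz ⊢; omega) (by simp [NL])
            C' m hm hR
          exact ⟨.right S₂, by simp [f, hS₂f], by simp [sig, hS₂s]⟩
    | both L R =>
      simp only [f] at h
      by_cases htr : true ∈ f R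
      · obtain ⟨E, j, hfR⟩ := exists_decomp htr
        have hrearr : C ++ true :: List.replicate m false
            = (f L ++ false :: true :: E) ++ true :: List.replicate j false := by
          rw [← h, hfR]; simp
        obtain ⟨hCeq, hjm⟩ := decomp_unique hrearr
        subst hjm
        cases R with
        | empty => simp [f] at htr
        | left M =>
          simp only [f] at hfR
          rw [repl_pred m hm] at hfR
          have hfR' : f M ++ [false] = (E ++ true :: List.replicate (m-1) false) ++ [false] := by
            simpa [List.append_assoc] using hfR
          obtain ⟨hM, _⟩ := List.append_inj' hfR' rfl
          rcases Nat.lt_or_ge 1 m with hm2 | hm1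
          · -- m ≥ 2
            obtain ⟨L₀, hL₀f, hL₀s⟩ := ihn (.both L M) (by simp [sz] at hsz ⊢; omega) (by simp [NL])
              C (m-1) (by omega)
              (by rw [f, hM, hCeq]; simp)
            refine ⟨.left L₀, ?_, ?_⟩
            · rw [f, hL₀f, repl_pred m hm]; simp
            · have hms : sig m (BTree.left L₀) = zeta (sig (m-1) L₀) := by
                simp only [sig, if_neg (by omega : ¬ m ≤ 1)]
              rw [hms, hL₀s]
              simp [zeta]
          · -- m = 1
            have hm1' : m = 1 := by omega
            subst hm1'
            simp only [Nat.sub_self, List.replicate, List.append_nil] at hM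
            obtain ⟨M₁, rfl, hM₁⟩ := phi_surj M E hM
            refine ⟨.left (.both L M₁), ?_, ?_⟩
            · rw [f, f, hM₁, hCeq]; simp [List.replicate]
            · simp [sig, phi, zeta]
        | right R' =>
          obtain ⟨S₂, hS₂f, hS₂s⟩ := ihn (.right R') (by simp [sz] at hsz ⊢; omega) (by simp [NL])
            E m hm hfR
          refine ⟨.both L S₂, ?_, by simp [sig, hS₂s]⟩
          rw [f, hS₂f, hCeq]; simp
        | both L' R' =>
          obtain ⟨S₂, hS₂f, hS₂s⟩ := ihn (.both L' R') (by simp [sz] at hsz ⊢; omega) (by simp [NL])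
            E m hm hfR
          refine ⟨.both L S₂, ?_, by simp [sig, hS₂s]⟩
          rw [f, hS₂f, hCeq]; simp
      · -- f R is all false
        have hallf : f R = List.replicate (f R).length false := by
          apply List.eq_replicate_of_mem
          intro b hb
          cases b with
          | true => exact absurd hb htr
          | false => rfl
        have hrearr : (f L ++ [false]) ++ true :: List.replicate (f R).length false
            = C ++ true :: List.replicate m false := by
          rw [← h]; conv_lhs => rw [← hallf]
          simp
        obtain ⟨hCeq, hkm⟩ := decomp_unique hrearr
        have hRchain : R = chain m := by
          rw [← hkm]; exact chain_unique R _ hallf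
        subst hRchain
        rcases Nat.lt_or_ge 1 m with hm2 | hm1
        · -- m ≥ 2
          obtain ⟨L₀, hL₀f, hL₀s⟩ := ihn (.both L (chain (m-1)))
            (by simp [sz, sz_chain] at hsz ⊢; omega)
            (by simp [NL]) C (m-1) (by omega)
            (by rw [f, f_chain, ← hCeq]; simp)
          refine ⟨.left L₀, ?_, ?_⟩
          · rw [f, hL₀f, repl_pred m hm]; simp
          · have hms : sig m (BTree.left L₀) = zeta (sig (m-1) L₀) := by
              simp only [sig, if_neg (by omega : ¬ m ≤ 1)]
            rw [hms, hL₀s]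
            have hcm : chain m = .left (chain (m-1)) := by
              conv_lhs => rw [show m = (m-1)+1 by omega]
              rfl
            rw [hcm]
            simp [zeta]
        · -- m = 1
          have hm1' : m = 1 := by omega
          subst hm1'
          refine ⟨.left (.left L), ?_, ?_⟩
          · rw [f, f, ← hCeq]; simp [List.replicate]
          · simp [sig, phi, zeta, chain]

lemma ones_repl (m : ℕ) : ones (List.replicate m false) = 0 := by
  simp [ones, List.count_replicate]

lemma ones_concat_true (X : List Bool) : ones (X ++ [true]) = ones X + 1 := by
  simp [ones, List.count_append]

lemma ones_concat_false (X : List Bool) : ones (X ++ [false]) = ones X := by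
  simp [ones, List.count_append]

lemma decomp_ends_false {A A' C : List Bool} {m : ℕ}
    (hA : A = A' ++ [false]) (hd : A = C ++ true :: List.replicate m false) : 1 ≤ m := by
  rcases Nat.eq_zero_or_pos m with rfl | h
  · exfalso
    rw [hA] at hd
    simp only [List.replicate] at hd
    obtain ⟨_, h2⟩ := List.append_inj' hd rfl
    simp at h2
  · exact h

lemma take_all_of_ge {A : List Bool} {k : ℕ} (h : A.length ≤ k) : A.take k = A :=
  List.take_of_length_le h

lemma main_ex : ∀ (n : ℕ) (A B : List Bool), A.length ≤ n → Cond A B →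
    ∃ T, f T = A ∧ g T = B := by
  intro n
  induction n with
  | zero =>
    intro A B hn hc
    have hA : A = [] := List.eq_nil_of_length_eq_zero (by omega)
    have hB : B = [] := List.eq_nil_of_length_eq_zero (by rw [← hc.1, hA]; rfl)
    exact ⟨.empty, by simp [f, hA], by simp [g, hB]⟩
  | succ n ihn =>
    intro A B hn hc
    obtain ⟨hlen, hones, hpre⟩ := hc
    rcases List.eq_nil_or_concat' A with rfl | ⟨A', a, rfl⟩
    · have hB : B = [] := List.eq_nil_of_length_eq_zero (by simpa using hlen.symm)
      exact ⟨.empty, rfl, by simp [g, hB]⟩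
    rcases List.eq_nil_or_concat' B with rfl | ⟨B', b, rfl⟩
    · simp at hlen
    have hlen' : A'.length = B'.length := by simpa using hlen
    have hkey : ones B' ≤ ones A' := by
      have h := hpre A'.length
      have e1 : (A' ++ [a]).take A'.length = A' := List.take_left' rfl
      have e2 : (B' ++ [b]).take A'.length = B' := List.take_left' hlen'.symm
      rwa [e1, e2] at h
    cases a with
    | true =>
      have hb : b = true := by
        cases b with
        | true => rfl
        | false =>
          exfalso
          rw [ones_concat_false, ones_concat_true] at hones
          omega
      subst hb
      have hones' : ones B' = ones A' := by
        rw [ones_concat_true, ones_concat_true] at hones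
        omega
      have hcond : Cond A' B' := by
        refine ⟨hlen', hones', fun k => ?_⟩
        rcases le_or_gt k A'.length with hk | hk
        · have := hpre k
          rwa [List.take_append_of_le_length hk,
               List.take_append_of_le_length (by omega)] at this
        · rw [take_all_of_ge (by omega), take_all_of_ge (by omega)]
          exact le_of_eq hones'
      obtain ⟨T', hf', hg'⟩ := ihn A' B' (by simpa using hn) hcond
      exact ⟨phi T', by rw [f_phi, hf'], by rw [g_phi, hg']⟩
    | false =>
      cases b with
      | false =>
        have hones' : ones B' = ones A' := by
          rw [ones_concat_false, ones_concat_false] at hones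
          exact hones
        have hcond : Cond A' B' := by
          refine ⟨hlen', hones', fun k => ?_⟩
          rcases le_or_gt k A'.length with hk | hk
          · have := hpre k
            rwa [List.take_append_of_le_length hk,
                 List.take_append_of_le_length (by omega)] at this
          · rw [take_all_of_ge (by omega), take_all_of_ge (by omega)]
            exact le_of_eq hones'
        obtain ⟨T', hf', hg'⟩ := ihn A' B' (by simpa using hn) hcond
        exact ⟨.left T', by rw [f, hf'], by rw [g, hg']⟩
      | true =>
        -- B ends in 1, A ends in 0
        rw [ones_concat_true, ones_concat_false] at hones
        have hmem : true ∈ A' ++ [false] := by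
          by_contra hno
          have hz : ones (A' ++ [false]) = 0 := by
            simp [ones, List.count_eq_zero_of_not_mem hno]
          rw [ones_concat_false] at hz
          omega
        obtain ⟨C, m, hd⟩ := exists_decomp hmem
        have hm : 1 ≤ m := decomp_ends_false rfl hd
        have hlC : A'.length + 1 = C.length + 1 + m := by
          have := congrArg List.length hd
          simp at this
          omega
        have honesA : ones A' = ones C + 1 := by
          have : ones (A' ++ [false]) = ones C + 1 := by
            rw [hd, ones_append]; simp [ones, List.count_cons, List.count_replicate]
          rw [ones_concat_false] at this
          exact this
        have honesB : ones B' = ones C := by omega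
        have hlB' : B'.length = C.length + m := by omega
        have hcond : Cond (C ++ List.replicate m false) B' := by
          refine ⟨by simp; omega, by simp [ones_append, ones_repl, honesB], fun k => ?_⟩
          rcases le_or_gt k C.length with hk | hk
          · have h1 : (C ++ List.replicate m false).take k = (A' ++ [false]).take k := by
              rw [hd, List.take_append_of_le_length hk, List.take_append_of_le_length hk]
            have h2 : B'.take k = (B' ++ [true]).take k := by
              rw [List.take_append_of_le_length (by omega)]
            rw [h1, h2]
            exact hpre k
          · have h1 : ones ((C ++ List.replicate m false).take k) = ones C := by
              rw [List.take_append, ones_append,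
                  take_all_of_ge (by omega)]
              have : ones ((List.replicate m false).take (k - C.length)) = 0 := by
                rw [List.take_replicate]; simp [ones, List.count_replicate]
              omega
            rw [h1]
            exact le_trans (ones_take_le B' k) (le_of_eq honesB)
        obtain ⟨S, hSf, hSg⟩ := ihn (C ++ List.replicate m false) B'
          (by simp at hn ⊢; omega) hcond
        obtain ⟨hf1, hg1, _⟩ := sig_spec S C m hm hSf
        exact ⟨sig m S, by rw [hf1, ← hd], by rw [hg1, hSg]⟩

lemma tri (T : BTree) : T = .empty ∨ (∃ L, T = .left L) ∨ NL T := by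
  cases T with
  | empty => left; rfl
  | left L => right; left; exact ⟨L, rfl⟩
  | right R => right; right; trivial
  | both L R => right; right; trivial

lemma main_inj : ∀ (n : ℕ) (T₁ T₂ : BTree), (f T₁).length ≤ n →
    f T₁ = f T₂ → g T₁ = g T₂ → T₁ = T₂ := by
  intro n
  induction n with
  | zero =>
    intro T₁ T₂ hn hf hg
    have h1 : T₁ = .empty := f_eq_nil (List.eq_nil_of_length_eq_zero (by omega))
    have h2 : T₂ = .empty := f_eq_nil (List.eq_nil_of_length_eq_zero (by rw [← hf]; omega))
    rw [h1, h2]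
  | succ n ihn =>
    intro T₁ T₂ hn hf hg
    rcases List.eq_nil_or_concat' (f T₁) with hnil | ⟨A', a, hA⟩
    · have h1 : T₁ = .empty := f_eq_nil hnil
      have h2 : T₂ = .empty := f_eq_nil (by rw [← hf]; exact hnil)
      rw [h1, h2]
    cases a with
    | true =>
      obtain ⟨T₁', rfl, hf₁⟩ := phi_surj T₁ A' hA
      obtain ⟨T₂', rfl, hf₂⟩ := phi_surj T₂ A' (by rw [← hf]; exact hA)
      have hg' : g T₁' = g T₂' := by
        rw [g_phi, g_phi] at hg
        exact (List.append_inj' hg rfl).1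
      have hf' : f T₁' = f T₂' := by rw [hf₁, hf₂]
      have hlen1 : (f T₁').length ≤ n := by
        rw [f_phi] at hn
        simp at hn
        omega
      rw [ihn T₁' T₂' hlen1 hf' hg']
    | false =>
      rcases tri T₁ with h1 | ⟨L₁, rfl⟩ | h1
      · rw [h1] at hA; simp [f] at hA
      · rcases tri T₂ with h2 | ⟨L₂, rfl⟩ | h2
        · rw [h2] at hf; rw [hA] at hf; simp [f] at hf
        · -- both left
          simp only [f] at hf
          simp only [g] at hg
          have hf' := (List.append_inj' hf rfl).1
          have hg' := (List.append_inj' hg rfl).1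
          have hlen1 : (f L₁).length ≤ n := by
            simp only [f] at hn
            simp at hn
            omega
          rw [ihn L₁ L₂ hlen1 hf' hg']
        · -- left vs NL
          exfalso
          obtain ⟨X, hX⟩ := g_NL h2
          rw [hX] at hg
          simp only [g] at hg
          have := (List.append_inj' hg rfl).2
          simp at this
      · rcases tri T₂ with h2 | ⟨L₂, rfl⟩ | h2
        · rw [h2] at hf; rw [hA] at hf; simp [f] at hf
        · exfalso
          obtain ⟨X, hX⟩ := g_NL h1
          rw [hX] at hg
          simp only [g] at hg
          have := (List.append_inj' hg.symm rfl).2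
          simp at this
        · -- both NL
          have hmem : true ∈ f T₁ := NL_mem_f h1
          obtain ⟨C, m, hd⟩ := exists_decomp hmem
          have hm : 1 ≤ m := decomp_ends_false hA hd
          obtain ⟨S₁, hS₁f, hS₁s⟩ := sig_surj (sz T₁) T₁ le_rfl h1 C m hm hd
          obtain ⟨S₂, hS₂f, hS₂s⟩ := sig_surj (sz T₂) T₂ le_rfl h2 C m hm (by rw [← hf]; exact hd)
          obtain ⟨_, hg₁, _⟩ := sig_spec S₁ C m hm hS₁f
          obtain ⟨_, hg₂, _⟩ := sig_spec S₂ C m hm hS₂f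
          rw [hS₁s] at hg₁
          rw [hS₂s] at hg₂
          have hgS : g S₁ = g S₂ := by
            have : g S₁ ++ [true] = g S₂ ++ [true] := by rw [← hg₁, ← hg₂, hg]
            exact (List.append_inj' this rfl).1
          have hfS : f S₁ = f S₂ := by rw [hS₁f, hS₂f]
          have hlen : (f S₁).length ≤ n := by
            rw [hS₁f]
            have h1 := congrArg List.length hd
            have h2 := congrArg List.length hA
            simp at h1 h2 ⊢
            omega
          rw [← hS₁s, ← hS₂s, ihn S₁ S₂ hlen hfS hgS]

/-- The number of binary trees encoding a given binary sequence A equals W(A). -/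
theorem card_trees_encoding_eq_weight (A : List Bool) :
    Set.ncard {T : BTree | f T = A} = W A := by
  have himg : g '' {T : BTree | f T = A} = {B | Dom A B} := by
    ext B
    constructor
    · rintro ⟨T, hT, rfl⟩
      simp only [Set.mem_setOf_eq] at hT ⊢
      rw [← hT]
      exact dom_fg T
    · intro hB
      obtain ⟨T, h1, h2⟩ := main_ex A.length A B le_rfl (dom_cond hB)
      exact ⟨T, h1, h2⟩
  have hinj : Set.InjOn g {T : BTree | f T = A} := by
    intro T₁ h₁ T₂ h₂ hg
    exact main_inj (f T₁).length T₁ T₂ le_rfl (h₁.trans h₂.symm) hg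
  rw [W, ← himg, Set.ncard_image_of_injOn hinj]
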